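/- Let Φ and Ψ be two completely positive maps on M_N(ℂ), both self-adjoint with respect to the KMS inner product. Let Φ(A) = Σ_{j=1}^M V_j* A V_j be a minimal Kraus representation of Φ in which each V_j satisfies σ^{−1/2} V_j σ^{1/2} = V_j*. Then Φ − Ψ is completely positive if and only if there exists a real M×M matrix T with 0 ≤ T ≤ 1 (as a self-adjoint matrix) such that Ψ(A) = Σ_{i,j=1}^M T_{i,j} V_i* A V_j for all A. -/

import Mathlib

open MeasureTheory Matrix
open scoped ComplexOrder

noncomputable section

/-- The algebra of `N × N` complex matrices. -/
abbrev Mat (N : ℕ) := Matrix (Fin N) (Fin N) ℂ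

variable {N : ℕ}

/-- Real power `σ^s` of a positive definite matrix, defined via the spectral decomposition. -/
noncomputable def mpow (σ : Mat N) (hσ : σ.PosDef) (s : ℝ) : Mat N :=
  (hσ.1.eigenvectorUnitary : Mat N) *
    Matrix.diagonal (fun i => ((hσ.1.eigenvalues i ^ s : ℝ) : ℂ)) *
    star (hσ.1.eigenvectorUnitary : Mat N)

/-- Complete positivity of a linear map on `M_N(ℂ)`: existence of a Kraus representation. -/
def IsCP (Φ : Mat N →ₗ[ℂ] Mat N) : Prop :=
  ∃ (M : ℕ) (V : Fin M → Mat N), ∀ A, Φ A = ∑ j, (V j)ᴴ * A * V j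

/-- The KMS inner product `⟨B,A⟩_KMS = Tr[Bᴴ σ^{1/2} A σ^{1/2}]`. -/
def kmsInner (σ : Mat N) (hσ : σ.PosDef) (B A : Mat N) : ℂ :=
  (Bᴴ * mpow σ hσ (1/2) * A * mpow σ hσ (1/2)).trace

/-- Self-adjointness with respect to the KMS inner product. -/
def IsKMSSelfAdjoint (σ : Mat N) (hσ : σ.PosDef) (Φ : Mat N →ₗ[ℂ] Mat N) : Prop :=
  ∀ A B, kmsInner σ hσ B (Φ A) = kmsInner σ hσ (Φ B) A


/-!
Everything is read off Choi matrices. Let `U` be the matrix whose `j`-th column is the conjugated,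
flattened Kraus operator `Vⱼ`; then `A ↦ ∑ cᵢⱼ Vᵢᴴ A Vⱼ` has Choi matrix `U c Uᴴ`, and linear
independence of the `Vⱼ` makes `U` injective, so `c ↦ U c Uᴴ` is injective and reflects positivity.
If `Ψ` and `Φ - Ψ` are CP, then `0 ≤ C(Ψ) ≤ C(Φ) = U Uᴴ`, hence `C(Ψ)` vanishes on `ker Uᴴ` and
equals `U T Uᴴ` with `0 ≤ T ≤ 1`. The relation `Vⱼ σ^{1/2} = σ^{1/2} Vⱼᴴ` makes the KMS adjoint of
`A ↦ ∑ cᵢⱼ Vᵢᴴ A Vⱼ` the map with coefficients `conj cᵢⱼ`, so KMS self-adjointness of `Ψ` forces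
`T` to be real. Conversely, writing `1 - T = Rᴴ R` exhibits the Kraus operators `∑ⱼ Rₖⱼ Vⱼ` of
`Φ - Ψ`.
-/

namespace Matrix

variable {m ι 𝕜 : Type*} [Fintype m] [Fintype ι] [DecidableEq ι] [RCLike 𝕜]

theorem exists_leftInverse_of_mulVec_injective {U : Matrix m ι 𝕜}
    (hU : Function.Injective U.mulVec) :
    ∃ L : Matrix ι m 𝕜, L * U = 1 ∧ (U * L).IsHermitian := by
  have hG : IsUnit (Uᴴ * U).det :=
    (isUnit_iff_isUnit_det _).mp (PosDef.conjTranspose_mul_self U hU).isUnit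
  refine ⟨(Uᴴ * U)⁻¹ * Uᴴ, by rw [Matrix.mul_assoc, nonsing_inv_mul _ hG], ?_⟩
  rw [IsHermitian, conjTranspose_mul, conjTranspose_mul, conjTranspose_nonsing_inv,
    conjTranspose_mul, conjTranspose_conjTranspose, Matrix.mul_assoc]

theorem mul_mul_conjTranspose_cancel_of_mul_eq_one {U : Matrix m ι 𝕜}
    {L : Matrix ι m 𝕜} (hLU : L * U = 1) (S : Matrix ι ι 𝕜) :
    L * (U * S * Uᴴ) * Lᴴ = S := by
  have hUL : Uᴴ * Lᴴ = 1 := by rw [← conjTranspose_mul, hLU, conjTranspose_one]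
  simp only [← Matrix.mul_assoc, hLU, Matrix.one_mul]
  rw [Matrix.mul_assoc, hUL, Matrix.mul_one]

theorem PosSemidef.of_mul_mul_conjTranspose {U : Matrix m ι 𝕜} {L : Matrix ι m 𝕜}
    (hLU : L * U = 1) {S : Matrix ι ι 𝕜} (h : (U * S * Uᴴ).PosSemidef) : S.PosSemidef :=
  mul_mul_conjTranspose_cancel_of_mul_eq_one hLU S ▸ h.mul_mul_conjTranspose_same L

omit [Fintype ι] [DecidableEq ι] in
theorem PosSemidef.mulVec_eq_zero_of_posSemidef_sub {C D : Matrix m m 𝕜} (hC : C.PosSemidef)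
    (hDC : (D - C).PosSemidef) {z : m → 𝕜} (hz : D *ᵥ z = 0) : C *ᵥ z = 0 := by
  refine (hC.dotProduct_mulVec_zero_iff z).mp (le_antisymm ?_ (hC.dotProduct_mulVec_nonneg z))
  have := hDC.dotProduct_mulVec_nonneg z
  rwa [sub_mulVec, dotProduct_sub, hz, dotProduct_zero, zero_sub, neg_nonneg] at this

theorem exists_eq_mul_mul_conjTranspose_of_posSemidef_sub [DecidableEq m] {C : Matrix m m 𝕜}
    {U : Matrix m ι 𝕜} (hU : Function.Injective U.mulVec) (hC : C.PosSemidef)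
    (hCU : (U * Uᴴ - C).PosSemidef) :
    ∃ S : Matrix ι ι 𝕜, S.PosSemidef ∧ (1 - S).PosSemidef ∧ C = U * S * Uᴴ := by
  obtain ⟨L, hLU, hP⟩ := exists_leftInverse_of_mulVec_injective hU
  have hUP : Uᴴ * (U * L) = Uᴴ := by
    rw [← hP.eq, Matrix.conjTranspose_mul, ← Matrix.mul_assoc, ← Matrix.conjTranspose_mul, hLU,
      conjTranspose_one, Matrix.one_mul]
  -- the columns of `1 - U L` lie in `ker Uᴴ ⊆ ker C`
  have hCP : C * (U * L) = C := by
    have hker : C * (1 - U * L) = 0 := ext_iff_mulVec.mpr fun v => by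
      rw [← mulVec_mulVec, zero_mulVec]
      refine hC.mulVec_eq_zero_of_posSemidef_sub hCU ?_
      rw [mulVec_mulVec, Matrix.mul_assoc, Matrix.mul_sub, hUP, Matrix.mul_one, sub_self,
        Matrix.mul_zero, zero_mulVec]
    rwa [Matrix.mul_sub, Matrix.mul_one, sub_eq_zero, eq_comm] at hker
  have hPC : U * L * C = C := by
    rw [← hP.eq, ← hC.isHermitian.eq, ← Matrix.conjTranspose_mul, hCP]
  have hfac : C = U * (L * C * Lᴴ) * Uᴴ :=
    calc C = U * L * C * (U * L)ᴴ := by rw [hP.eq, hPC, hCP]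
      _ = U * (L * C * Lᴴ) * Uᴴ := by simp only [Matrix.conjTranspose_mul, Matrix.mul_assoc]
  refine ⟨L * C * Lᴴ, hC.mul_mul_conjTranspose_same L, .of_mul_mul_conjTranspose hLU ?_, hfac⟩
  rwa [Matrix.mul_sub, Matrix.sub_mul, Matrix.mul_one, ← hfac]

open scoped MatrixOrder in
theorem posSemidef_map_ofReal_iff {T : Matrix ι ι ℝ} :
    (T.map (↑) : Matrix ι ι ℂ).PosSemidef ↔ T.PosSemidef := by
  have hstar : Function.Semiconj ((↑) : ℝ → ℂ) star star := fun x => (Complex.conj_ofReal x).symm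
  constructor
  · intro h
    refine .of_dotProduct_mulVec_nonneg ?_ fun x => ?_
    · refine map_injective Complex.ofReal_injective ?_
      change Tᴴ.map _ = T.map _
      rw [conjTranspose_map _ hstar, h.isHermitian.eq]
    · have hx := h.dotProduct_mulVec_nonneg ((↑) ∘ x)
      rw [star_trivial, ← Complex.zero_le_real]
      convert hx using 1
      simp [dotProduct, mulVec, Finset.mul_sum]
  · intro h
    obtain ⟨R, rfl⟩ := CStarAlgebra.nonneg_iff_eq_star_mul_self.mp h.nonneg
    have hR : (star R * R).map (↑) = (R.map (↑) : Matrix ι ι ℂ)ᴴ * R.map (↑) := by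
      rw [← conjTranspose_map _ hstar]
      exact Matrix.map_mul (f := Complex.ofRealHom)
    rw [hR]
    exact posSemidef_conjTranspose_mul_self _

end Matrix

section Kraus

variable {n ι κ : Type*} [Fintype n] [Fintype ι]

def krausMap (V : ι → Matrix n n ℂ) :
    Matrix ι ι ℂ →ₗ[ℂ] Matrix n n ℂ →ₗ[ℂ] Matrix n n ℂ :=
  ∑ i, ∑ j, (entryLinearMap ℂ ℂ i j).smulRight
    (LinearMap.mulLeft ℂ (V i)ᴴ ∘ₗ LinearMap.mulRight ℂ (V j))

theorem krausMap_apply (V : ι → Matrix n n ℂ) (c : Matrix ι ι ℂ) (A : Matrix n n ℂ) :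
    krausMap V c A = ∑ i, ∑ j, c i j • ((V i)ᴴ * A * V j) := by
  simp [krausMap, LinearMap.sum_apply, Matrix.mul_assoc]

theorem krausMap_conjTranspose_mul_self_apply [Fintype κ] (V : ι → Matrix n n ℂ)
    (R : Matrix κ ι ℂ) (A : Matrix n n ℂ) :
    krausMap V (Rᴴ * R) A = ∑ k, (∑ i, R k i • V i)ᴴ * A * ∑ j, R k j • V j := by
  simp only [krausMap_apply, Matrix.mul_apply, conjTranspose_apply, conjTranspose_sum,
    conjTranspose_smul, Matrix.sum_mul, Matrix.mul_sum, smul_mul_assoc, mul_smul_comm,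
    Finset.sum_smul, Finset.smul_sum, smul_smul]
  rw [Finset.sum_comm]
  refine (Finset.sum_congr rfl fun j _ => Finset.sum_comm).trans ?_
  rw [Finset.sum_comm]
  simp only [mul_comm]

theorem krausMap_one_apply [DecidableEq ι] (V : ι → Matrix n n ℂ) (A : Matrix n n ℂ) :
    krausMap V 1 A = ∑ j, (V j)ᴴ * A * V j := by
  simpa [one_apply, ite_smul] using
    krausMap_conjTranspose_mul_self_apply V (1 : Matrix ι ι ℂ) A

theorem trace_mul_krausMap_mul_eq {V : ι → Matrix n n ℂ} {s : Matrix n n ℂ}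
    (hV : ∀ j, V j * s = s * (V j)ᴴ) (c : Matrix ι ι ℂ) (A B : Matrix n n ℂ) :
    (Bᴴ * s * krausMap V c A * s).trace = ((krausMap V (c.map star) B)ᴴ * s * A * s).trace := by
  simp only [krausMap_apply, conjTranspose_sum, conjTranspose_smul, map_apply, star_star,
    Matrix.mul_sum, Matrix.sum_mul, mul_smul_comm, smul_mul_assoc, trace_sum, trace_smul]
  refine Finset.sum_congr rfl fun i _ => Finset.sum_congr rfl fun j _ => congr_arg _ ?_
  calc (Bᴴ * s * ((V i)ᴴ * A * V j) * s).trace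
      = (Bᴴ * (s * (V i)ᴴ) * A * (V j * s)).trace := by simp only [Matrix.mul_assoc]
    _ = (Bᴴ * (V i * s) * A * (s * (V j)ᴴ)).trace := by rw [hV i, hV j]
    _ = (Bᴴ * V i * s * A * s * (V j)ᴴ).trace := by simp only [Matrix.mul_assoc]
    _ = ((V j)ᴴ * (Bᴴ * V i * s * A * s)).trace := trace_mul_comm _ _
    _ = (((V i)ᴴ * B * V j)ᴴ * s * A * s).trace := by
        simp only [conjTranspose_mul, conjTranspose_conjTranspose, Matrix.mul_assoc]

def krausVec (V : ι → Matrix n n ℂ) : Matrix (n × n) ι ℂ :=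
  Matrix.of fun x j => star (V j x.1 x.2)

omit [Fintype n] in
theorem krausVec_mulVec_injective {V : ι → Matrix n n ℂ} (hV : LinearIndependent ℂ V) :
    Function.Injective (krausVec V).mulVec := by
  refine (injective_iff_map_eq_zero (krausVec V).mulVecLin).mpr fun v hv => ?_
  have hsum : ∑ j, star (v j) • V j = 0 := by
    ext a b
    simpa [krausVec, mulVec, dotProduct, Matrix.sum_apply, mul_comm] using
      congr_arg star (congr_fun hv (a, b))
  simpa [funext_iff] using Fintype.linearIndependent_iff.mp hV _ hsum

variable [DecidableEq n]

def choi (Φ : Matrix n n ℂ →ₗ[ℂ] Matrix n n ℂ) : Matrix (n × n) (n × n) ℂ :=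
  Matrix.of fun x y => Φ (single x.1 y.1 1) x.2 y.2

omit [Fintype n] in
theorem choi_sub (Φ Ψ : Matrix n n ℂ →ₗ[ℂ] Matrix n n ℂ) : choi (Φ - Ψ) = choi Φ - choi Ψ :=
  rfl

theorem choi_injective : Function.Injective (choi (n := n)) := fun _ _ h =>
  ext_linearMap ℂ fun i j =>
    LinearMap.ext_ring <| Matrix.ext fun k l => congr_fun₂ h (i, k) (j, l)

theorem choi_krausMap (V : ι → Matrix n n ℂ) (c : Matrix ι ι ℂ) :
    choi (krausMap V c) = krausVec V * c * (krausVec V)ᴴ := by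
  ext x y
  simp only [choi, krausVec, krausMap_apply, of_apply, Matrix.sum_apply, Matrix.smul_apply,
    Matrix.mul_apply, conjTranspose_apply, single_apply, Finset.sum_mul, star_star, smul_eq_mul,
    ite_and, mul_ite, ite_mul, mul_one, mul_zero, zero_mul, Finset.sum_ite_eq,
    Finset.mem_univ, if_true]
  exact Finset.sum_comm.trans
    (Finset.sum_congr rfl fun _ _ => Finset.sum_congr rfl fun _ _ => by ring)

theorem krausMap_injective [DecidableEq ι] {V : ι → Matrix n n ℂ} (hV : LinearIndependent ℂ V) :
    Function.Injective (krausMap V) := by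
  intro c d h
  obtain ⟨L, hLU, -⟩ := exists_leftInverse_of_mulVec_injective (krausVec_mulVec_injective hV)
  have hchoi := congr_arg choi h
  rw [choi_krausMap, choi_krausMap] at hchoi
  rw [← mul_mul_conjTranspose_cancel_of_mul_eq_one hLU c, hchoi,
    mul_mul_conjTranspose_cancel_of_mul_eq_one hLU d]

end Kraus

section KMS

variable {σ : Mat N} {hσ : σ.PosDef}

theorem mpow_add (s t : ℝ) : mpow σ hσ (s + t) = mpow σ hσ s * mpow σ hσ t := by
  have hU : star (hσ.1.eigenvectorUnitary : Mat N) * hσ.1.eigenvectorUnitary = 1 :=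
    Unitary.coe_star_mul_self _
  have hD : diagonal (fun i => ((hσ.1.eigenvalues i ^ (s + t) : ℝ) : ℂ)) =
      diagonal (fun i => ((hσ.1.eigenvalues i ^ s : ℝ) : ℂ)) *
        diagonal (fun i => ((hσ.1.eigenvalues i ^ t : ℝ) : ℂ)) := by
    simp only [diagonal_mul_diagonal, Real.rpow_add (hσ.eigenvalues_pos _), Complex.ofReal_mul]
  simp only [mpow, hD, Matrix.mul_assoc]
  rw [← Matrix.mul_assoc (star _) _ _, hU, Matrix.one_mul]

theorem mpow_zero : mpow σ hσ 0 = 1 := by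
  simp [mpow]

theorem mpow_mul_mpow_neg (s : ℝ) : mpow σ hσ s * mpow σ hσ (-s) = 1 := by
  rw [← mpow_add, add_neg_cancel, mpow_zero]

theorem mpow_neg_mul_mpow (s : ℝ) : mpow σ hσ (-s) * mpow σ hσ s = 1 := by
  rw [← mpow_add, neg_add_cancel, mpow_zero]

theorem eq_of_forall_kmsInner_eq {X Y : Mat N}
    (h : ∀ A, kmsInner σ hσ X A = kmsInner σ hσ Y A) : X = Y := by
  have hcancel : ∀ Z : Mat N, mpow σ hσ (1 / 2) * (mpow σ hσ (-(1 / 2)) * Z) = Z := fun Z => by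
    rw [← Matrix.mul_assoc, mpow_mul_mpow_neg, Matrix.one_mul]
  have htrace : ∀ C : Mat N, (Xᴴ * C).trace = (Yᴴ * C).trace := fun C => by
    simpa only [kmsInner, Matrix.mul_assoc, hcancel, mpow_neg_mul_mpow, Matrix.mul_one]
      using h (mpow σ hσ (-(1 / 2)) * C * mpow σ hσ (-(1 / 2)))
  rw [← sub_eq_zero, ← trace_conjTranspose_mul_self_eq_zero_iff, conjTranspose_sub,
    Matrix.sub_mul, trace_sub, htrace, sub_self]

theorem exists_map_ofReal_eq_of_isKMSSelfAdjoint_krausMap {ι : Type*} [Fintype ι]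
    [DecidableEq ι] {V : ι → Mat N} (hmin : LinearIndependent ℂ V)
    (hV : ∀ j, mpow σ hσ (-(1 / 2)) * V j * mpow σ hσ (1 / 2) = (V j)ᴴ) {c : Matrix ι ι ℂ}
    (hc : IsKMSSelfAdjoint σ hσ (krausMap V c)) : ∃ T : Matrix ι ι ℝ, T.map (↑) = c := by
  have hV' : ∀ j, V j * mpow σ hσ (1 / 2) = mpow σ hσ (1 / 2) * (V j)ᴴ := fun j => by
    rw [← hV, ← Matrix.mul_assoc, ← Matrix.mul_assoc, mpow_mul_mpow_neg, Matrix.one_mul]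
  have hreal : c.map star = c := krausMap_injective hmin <| LinearMap.ext fun B =>
    eq_of_forall_kmsInner_eq fun A => (trace_mul_krausMap_mul_eq hV' c A B).symm.trans (hc A B)
  exact ⟨c.map Complex.re, ext fun i j => Complex.conj_eq_iff_re.mp (congr_fun₂ hreal i j)⟩

end KMS

section CP

theorem IsCP.posSemidef_choi {Φ : Mat N →ₗ[ℂ] Mat N} (hΦ : IsCP Φ) : (choi Φ).PosSemidef := by
  obtain ⟨M, W, hW⟩ := hΦ
  have hΦW : Φ = krausMap W 1 := LinearMap.ext fun A => by rw [hW, krausMap_one_apply]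
  rw [hΦW, choi_krausMap, Matrix.mul_one]
  exact posSemidef_self_mul_conjTranspose _

open scoped MatrixOrder in
theorem isCP_krausMap {M : ℕ} (V : Fin M → Mat N) {c : Matrix (Fin M) (Fin M) ℂ}
    (hc : c.PosSemidef) : IsCP (krausMap V c) := by
  obtain ⟨R, rfl⟩ := CStarAlgebra.nonneg_iff_eq_star_mul_self.mp hc.nonneg
  exact ⟨M, fun k => ∑ j, R k j • V j, krausMap_conjTranspose_mul_self_apply V R⟩

theorem exists_posSemidef_krausMap_eq_of_isCP_sub {ι : Type*} [Fintype ι] [DecidableEq ι]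
    {V : ι → Mat N} (hmin : LinearIndependent ℂ V) {Φ Ψ : Mat N →ₗ[ℂ] Mat N}
    (hΦ : Φ = krausMap V 1) (hΨ : IsCP Ψ) (hΦΨ : IsCP (Φ - Ψ)) :
    ∃ c : Matrix ι ι ℂ, c.PosSemidef ∧ (1 - c).PosSemidef ∧ Ψ = krausMap V c := by
  have hle : (krausVec V * (krausVec V)ᴴ - choi Ψ).PosSemidef := by
    simpa only [choi_sub, hΦ, choi_krausMap, Matrix.mul_one] using hΦΨ.posSemidef_choi
  obtain ⟨c, hc, h1c, hΨc⟩ := exists_eq_mul_mul_conjTranspose_of_posSemidef_sub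
    (krausVec_mulVec_injective hmin) hΨ.posSemidef_choi hle
  exact ⟨c, hc, h1c, choi_injective (by rw [hΨc, choi_krausMap])⟩

end CP

theorem kms_radon_nikodym_general (N : ℕ) (σ : Mat N) (hσ : σ.PosDef)
    (Φ Ψ : Mat N →ₗ[ℂ] Mat N)
    (hΨcp : IsCP Ψ) (hΨsa : IsKMSSelfAdjoint σ hσ Ψ)
    (M : ℕ) (V : Fin M → Mat N) (hmin : LinearIndependent ℂ V)
    (hV : ∀ j, mpow σ hσ (-(1/2)) * V j * mpow σ hσ (1/2) = (V j)ᴴ)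
    (hrep : ∀ A, Φ A = ∑ j, (V j)ᴴ * A * V j) :
    IsCP (Φ - Ψ) ↔
      ∃ T : Matrix (Fin M) (Fin M) ℝ, T.PosSemidef ∧ (1 - T).PosSemidef ∧
        ∀ A, Ψ A = ∑ i, ∑ j, (T i j : ℂ) • ((V i)ᴴ * A * V j) := by
  have hΦ : Φ = krausMap V 1 := LinearMap.ext fun A => by rw [hrep, krausMap_one_apply]
  have hmap_one_sub (T : Matrix (Fin M) (Fin M) ℝ) :
      (1 - T).map (↑) = 1 - T.map ((↑) : ℝ → ℂ) := by
    rw [Matrix.map_sub _ Complex.ofReal_sub,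
      Matrix.map_one _ Complex.ofReal_zero Complex.ofReal_one]
  constructor
  · intro hΦΨ
    obtain ⟨c, hc, h1c, rfl⟩ := exists_posSemidef_krausMap_eq_of_isCP_sub hmin hΦ hΨcp hΦΨ
    obtain ⟨T, rfl⟩ := exists_map_ofReal_eq_of_isKMSSelfAdjoint_krausMap hmin hV hΨsa
    refine ⟨T, posSemidef_map_ofReal_iff.mp hc, posSemidef_map_ofReal_iff.mp ?_,
      krausMap_apply V _⟩
    rwa [hmap_one_sub]
  · rintro ⟨T, -, h1T, hΨ⟩
    have hΨT : Ψ = krausMap V (T.map (↑)) :=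
      LinearMap.ext fun A => (hΨ A).trans (krausMap_apply V _ A).symm
    rw [hΦ, hΨT, ← map_sub, ← hmap_one_sub]
    exact isCP_krausMap V (posSemidef_map_ofReal_iff.mpr h1T)

/-- Radon–Nikodym theorem for KMS self-adjoint CP maps: if `Φ, Ψ` are CP and
KMS self-adjoint and `Φ(A) = Σ_j Vⱼᴴ A Vⱼ` is a minimal Kraus representation with each
`Vⱼ` satisfying `σ^{-1/2} Vⱼ σ^{1/2} = Vⱼᴴ`, then `Φ - Ψ` is CP iff
`Ψ(A) = Σ_{i,j} T_{ij} Vᵢᴴ A Vⱼ` for some real matrix `T` with `0 ≤ T ≤ 1`. -/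
theorem kms_radon_nikodym (N : ℕ) (hN : 2 ≤ N) (σ : Mat N) (hσ : σ.PosDef)
    (htr : σ.trace = 1) (Φ Ψ : Mat N →ₗ[ℂ] Mat N)
    (hΦcp : IsCP Φ) (hΦsa : IsKMSSelfAdjoint σ hσ Φ)
    (hΨcp : IsCP Ψ) (hΨsa : IsKMSSelfAdjoint σ hσ Ψ)
    (M : ℕ) (V : Fin M → Mat N) (hmin : LinearIndependent ℂ V)
    (hV : ∀ j, mpow σ hσ (-(1/2)) * V j * mpow σ hσ (1/2) = (V j)ᴴ)
    (hrep : ∀ A, Φ A = ∑ j, (V j)ᴴ * A * V j) :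
    IsCP (Φ - Ψ) ↔
      ∃ T : Matrix (Fin M) (Fin M) ℝ, T.PosSemidef ∧ (1 - T).PosSemidef ∧
        ∀ A, Ψ A = ∑ i, ∑ j, (T i j : ℂ) • ((V i)ᴴ * A * V j) :=
  kms_radon_nikodym_general N σ hσ Φ Ψ hΨcp hΨsa M V hmin hV hrep
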